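/- arXiv:2501.02896 — 4 statements merged into one kernel-verified Lean document; each statement's English description precedes it below -/
import Mathlib

section
/- Let K and L be convex bodies in ℝⁿ such that K ∪ L is convex. Then (K ∪ L) + (K ∩ L) = K + L, where + denotes Minkowski addition. -/
/-!
For `k ∈ K` and `l ∈ L`, the segment `[k, l]` lies in the convex set `K ∪ L` and, being connected,
meets the closed set `K ∩ L` at some `z`. The reflection `k + l - z` of `z` through the midpoint of
`[k, l]` is again in `[k, l] ⊆ K ∪ L`, and `k + l = (k + l - z) + z`.
-/

open Pointwise

theorem add_sub_mem_segment {𝕜 E : Type*} [CommRing 𝕜] [PartialOrder 𝕜] [AddCommGroup E]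
    [Module 𝕜 E] {x y z : E} (hz : z ∈ segment 𝕜 x y) : x + y - z ∈ segment 𝕜 x y := by
  obtain ⟨a, b, ha, hb, hab, rfl⟩ := hz
  obtain rfl := eq_sub_of_add_eq' hab
  exact ⟨1 - a, a, hb, ha, sub_add_cancel 1 a, by module⟩

section

variable {E : Type*} [AddCommGroup E] [Module ℝ E] [TopologicalSpace E] [ContinuousAdd E]
  [ContinuousSMul ℝ E] {K L : Set E}

theorem segment_inter_inter_nonempty_of_isClosed (hK : IsClosed K) (hL : IsClosed L)
    {x y : E} (hx : x ∈ K) (hy : y ∈ L) (hxy : segment ℝ x y ⊆ K ∪ L) :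
    (segment ℝ x y ∩ (K ∩ L)).Nonempty :=
  isPreconnected_closed_iff.mp (convex_segment x y).isPreconnected K L hK hL hxy
    ⟨x, left_mem_segment ℝ x y, hx⟩ ⟨y, right_mem_segment ℝ x y, hy⟩

theorem add_subset_union_add_inter (hK : IsClosed K) (hL : IsClosed L)
    (hKL : Convex ℝ (K ∪ L)) : K + L ⊆ (K ∪ L) + (K ∩ L) := by
  rintro _ ⟨k, hk, l, hl, rfl⟩
  have hseg : segment ℝ k l ⊆ K ∪ L := hKL.segment_subset (.inl hk) (.inr hl)
  obtain ⟨z, hz, hzKL⟩ := segment_inter_inter_nonempty_of_isClosed hK hL hk hl hseg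
  exact ⟨k + l - z, hseg (add_sub_mem_segment hz), z, hzKL, sub_add_cancel _ _⟩

end

theorem sallee_union_inter_add_general {n : ℕ} (K L : Set (EuclideanSpace ℝ (Fin n)))
    (hKcomp : IsCompact K) (hLcomp : IsCompact L)
    (hUnion : Convex ℝ (K ∪ L)) :
    (K ∪ L) + (K ∩ L) = K + L :=
  Set.union_add_inter_subset.antisymm
    (add_subset_union_add_inter hKcomp.isClosed hLcomp.isClosed hUnion)

/-- **Sallee's theorem**: if `K` and `L` are convex bodies in `ℝⁿ` with `K ∪ L` convex,
then `(K ∪ L) + (K ∩ L) = K + L` (Minkowski addition). -/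
theorem sallee_union_inter_add {n : ℕ} (K L : Set (EuclideanSpace ℝ (Fin n)))
    (hKne : K.Nonempty) (hKcomp : IsCompact K) (hKconv : Convex ℝ K)
    (hLne : L.Nonempty) (hLcomp : IsCompact L) (hLconv : Convex ℝ L)
    (hUnion : Convex ℝ (K ∪ L)) :
    (K ∪ L) + (K ∩ L) = K + L :=
  sallee_union_inter_add_general K L hKcomp hLcomp hUnion
end

section
/- Let K, L, A be convex bodies in ℝⁿ with K ∪ L convex. Then (K + A) ∪ (L + A) = (K ∪ L) + A and (K + A) ∩ (L + A) = (K ∩ L) + A. In particular (K + A) ∪ (L + A) is convex. -/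
/-!
If `k + p = l + q` with `k ∈ K`, `l ∈ L`, `p, q ∈ A`, the segment `[k, l]` lies in the convex set
`K ∪ L` and is connected, so, `K` and `L` being closed, it meets `K ∩ L` at some `m = s • k + t • l`.
Then `k + p = s • (k + p) + t • (l + q) = m + (s • p + t • q)`,
and `s • p + t • q ∈ A` by convexity of `A`.
-/

open Pointwise

section

variable {E : Type*} [AddCommGroup E] [Module ℝ E] [TopologicalSpace E] [ContinuousAdd E]
  [ContinuousSMul ℝ E]

theorem Convex.exists_mem_segment_inter_of_union {K L : Set E} (hK : IsClosed K)
    (hL : IsClosed L) (hKL : Convex ℝ (K ∪ L)) {k l : E} (hk : k ∈ K) (hl : l ∈ L) :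
    ∃ m ∈ segment ℝ k l, m ∈ K ∩ L := by
  have hseg : segment ℝ k l ⊆ K ∪ L := hKL.segment_subset (.inl hk) (.inr hl)
  exact isPreconnected_closed_iff.mp (convex_segment k l).isPreconnected
    K L hK hL hseg ⟨k, left_mem_segment ℝ k l, hk⟩ ⟨l, right_mem_segment ℝ k l, hl⟩

theorem Convex.add_inter_add_eq_inter_add {K L A : Set E} (hK : IsClosed K) (hL : IsClosed L)
    (hKL : Convex ℝ (K ∪ L)) (hA : Convex ℝ A) : (K + A) ∩ (L + A) = (K ∩ L) + A := by
  refine subset_antisymm ?_ Set.inter_add_subset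
  rintro x ⟨⟨k, hk, p, hp, rfl⟩, ⟨l, hl, q, hq, hlq⟩⟩
  obtain ⟨m, ⟨s, t, hs, ht, hst, rfl⟩, hm⟩ := hKL.exists_mem_segment_inter_of_union hK hL hk hl
  refine ⟨_, hm, s • p + t • q, hA hp hq hs ht hst, ?_⟩
  calc s • k + t • l + (s • p + t • q) = s • (k + p) + t • (l + q) := by module
    _ = k + p := by rw [show l + q = k + p from hlq, ← add_smul, hst, one_smul]

end

theorem minkowski_union_inter_translate_general {n : ℕ}
    (K L A : Set (EuclideanSpace ℝ (Fin n)))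
    (hKcomp : IsCompact K)
    (hLcomp : IsCompact L)
    (hAconv : Convex ℝ A)
    (hUnion : Convex ℝ (K ∪ L)) :
    (K + A) ∪ (L + A) = (K ∪ L) + A ∧
    (K + A) ∩ (L + A) = (K ∩ L) + A ∧
    Convex ℝ ((K + A) ∪ (L + A)) := by
  have hunion : (K + A) ∪ (L + A) = (K ∪ L) + A := (Set.union_add ..).symm
  refine ⟨hunion, hUnion.add_inter_add_eq_inter_add hKcomp.isClosed hLcomp.isClosed hAconv, ?_⟩
  rw [hunion]
  exact hUnion.add hAconv

/-- If `K`, `L`, `A` are convex bodies with `K ∪ L` convex, then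
`(K + A) ∪ (L + A) = (K ∪ L) + A` and `(K + A) ∩ (L + A) = (K ∩ L) + A`;
in particular `(K + A) ∪ (L + A)` is convex. -/
theorem minkowski_union_inter_translate {n : ℕ}
    (K L A : Set (EuclideanSpace ℝ (Fin n)))
    (hKne : K.Nonempty) (hKcomp : IsCompact K) (hKconv : Convex ℝ K)
    (hLne : L.Nonempty) (hLcomp : IsCompact L) (hLconv : Convex ℝ L)
    (hAne : A.Nonempty) (hAcomp : IsCompact A) (hAconv : Convex ℝ A)
    (hUnion : Convex ℝ (K ∪ L)) :
    (K + A) ∪ (L + A) = (K ∪ L) + A ∧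
    (K + A) ∩ (L + A) = (K ∩ L) + A ∧
    Convex ℝ ((K + A) ∪ (L + A)) :=
  minkowski_union_inter_translate_general K L A hKcomp hLcomp hAconv hUnion
end

section
/- On the space Δ of functions on ℝⁿ that are differences of two convex positively 1-homogeneous functions, the quantity ‖f‖ = inf{ ‖ψ‖₀ + ‖φ‖₀ : f = ψ − φ, ψ, φ convex and 1-homogeneous }, where ‖g‖₀ = sup_{|x|=1}|g(x)|, is a norm, and Δ equipped with this norm is complete. -/
/-- A convex, positively 1-homogeneous function on `ℝⁿ`. -/
def Hom1Convex {n : ℕ} (ψ : EuclideanSpace ℝ (Fin n) → ℝ) : Prop :=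
  ConvexOn ℝ Set.univ ψ ∧ ∀ t : ℝ, 0 ≤ t → ∀ x, ψ (t • x) = t * ψ x

/-- Membership in `Δ`: differences of convex positively 1-homogeneous functions. -/
def InDelta {n : ℕ} (f : EuclideanSpace ℝ (Fin n) → ℝ) : Prop :=
  ∃ ψ φ, Hom1Convex ψ ∧ Hom1Convex φ ∧ f = ψ - φ

/-- Sup norm on the unit sphere. -/
noncomputable def sphereSup {n : ℕ} (g : EuclideanSpace ℝ (Fin n) → ℝ) : ℝ :=
  sSup ((fun x => |g x|) '' Metric.sphere (0 : EuclideanSpace ℝ (Fin n)) 1)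

/-- The norm `‖f‖ = inf{‖ψ‖₀ + ‖φ‖₀ : f = ψ − φ}` on `Δ`. -/
noncomputable def deltaNorm {n : ℕ} (f : EuclideanSpace ℝ (Fin n) → ℝ) : ℝ :=
  sInf {a | ∃ ψ φ, Hom1Convex ψ ∧ Hom1Convex φ ∧ f = ψ - φ ∧
    a = sphereSup ψ + sphereSup φ}

/-!
A convex positively 1-homogeneous function is continuous, hence bounded on the sphere, and
`|ψ x| ≤ ‖ψ‖₀ ‖x‖`; so `‖f‖ = 0` forces `f = 0`, while homogeneity and the triangle inequality
come from scaling (swapping `ψ` and `φ` for negative scalars) and adding decompositions.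
Completeness is the usual "absolutely convergent series converge" argument: pass to a subsequence
whose consecutive differences have norm `< 2⁻ʲ`, decompose each difference as `ψⱼ - φⱼ` with
`‖ψⱼ‖₀ + ‖φⱼ‖₀ < 2⁻ʲ`, and sum the two series separately. A uniformly summable series of convex
1-homogeneous functions is again convex and 1-homogeneous, so the limit lies in `Δ`, and the
tails of the two series decompose the remainders.
-/

open Metric Set Filter Topology Pointwise

variable {n : ℕ}

theorem sphereSup_nonneg (g : EuclideanSpace ℝ (Fin n) → ℝ) : 0 ≤ sphereSup g :=
  Real.sSup_nonneg (by rintro _ ⟨x, _, rfl⟩; exact abs_nonneg _)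

theorem sphereSup_le {g : EuclideanSpace ℝ (Fin n) → ℝ} {c : ℝ} (hc : 0 ≤ c)
    (h : ∀ x ∈ sphere (0 : EuclideanSpace ℝ (Fin n)) 1, |g x| ≤ c) : sphereSup g ≤ c :=
  Real.sSup_le (by rintro _ ⟨x, hx, rfl⟩; exact h x hx) hc

theorem abs_le_sphereSup {g : EuclideanSpace ℝ (Fin n) → ℝ} (hg : Continuous g)
    {x : EuclideanSpace ℝ (Fin n)} (hx : x ∈ sphere 0 1) : |g x| ≤ sphereSup g :=
  le_csSup ((isCompact_sphere 0 1).bddAbove_image hg.abs.continuousOn) ⟨x, hx, rfl⟩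

theorem sphereSup_zero : sphereSup (0 : EuclideanSpace ℝ (Fin n) → ℝ) = 0 :=
  le_antisymm (sphereSup_le le_rfl (by simp)) (sphereSup_nonneg _)

theorem sphereSup_smul {c : ℝ} (hc : 0 ≤ c) (g : EuclideanSpace ℝ (Fin n) → ℝ) :
    sphereSup (c • g) = c * sphereSup g := by
  rw [sphereSup, sphereSup, ← smul_eq_mul, ← Real.sSup_smul_of_nonneg hc, ← image_smul,
    image_image]
  simp [abs_mul, abs_of_nonneg hc]

theorem sphereSup_add_le {g h : EuclideanSpace ℝ (Fin n) → ℝ} (hg : Continuous g)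
    (hh : Continuous h) : sphereSup (g + h) ≤ sphereSup g + sphereSup h :=
  sphereSup_le (add_nonneg (sphereSup_nonneg _) (sphereSup_nonneg _)) fun _ hx =>
    (abs_add_le _ _).trans (add_le_add (abs_le_sphereSup hg hx) (abs_le_sphereSup hh hx))

namespace Hom1Convex

section

variable {ψ φ : EuclideanSpace ℝ (Fin n) → ℝ}

theorem map_zero (h : Hom1Convex ψ) : ψ 0 = 0 := by
  simpa using h.2 0 le_rfl 0

protected theorem continuous (h : Hom1Convex ψ) : Continuous ψ :=
  h.1.locallyLipschitz.continuous

theorem abs_le_sphereSup_mul_norm (h : Hom1Convex ψ) (x : EuclideanSpace ℝ (Fin n)) :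
    |ψ x| ≤ sphereSup ψ * ‖x‖ := by
  rcases eq_or_ne x 0 with rfl | hx
  · simp [h.map_zero]
  have hnx : 0 < ‖x‖ := norm_pos_iff.mpr hx
  have hu : ‖x‖⁻¹ • x ∈ sphere (0 : EuclideanSpace ℝ (Fin n)) 1 := by
    simp [norm_smul, hnx.ne']
  have hscale : ψ x = ‖x‖ * ψ (‖x‖⁻¹ • x) := by
    rw [← h.2 _ hnx.le, smul_smul, mul_inv_cancel₀ hnx.ne', one_smul]
  rw [hscale, abs_mul, abs_of_pos hnx, mul_comm]
  exact mul_le_mul_of_nonneg_right (abs_le_sphereSup h.continuous hu) hnx.le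

protected theorem zero : Hom1Convex (0 : EuclideanSpace ℝ (Fin n) → ℝ) :=
  ⟨convexOn_const 0 convex_univ, by simp⟩

protected theorem add (hψ : Hom1Convex ψ) (hφ : Hom1Convex φ) : Hom1Convex (ψ + φ) :=
  ⟨hψ.1.add hφ.1, fun t ht x => by simp [hψ.2 t ht, hφ.2 t ht, mul_add]⟩

protected theorem smul (h : Hom1Convex ψ) {c : ℝ} (hc : 0 ≤ c) : Hom1Convex (c • ψ) :=
  ⟨h.1.smul hc, fun t ht x => by simp [h.2 t ht, mul_left_comm]⟩

end

section

variable {ψ : ℕ → EuclideanSpace ℝ (Fin n) → ℝ}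

protected theorem summable (hψ : ∀ k, Hom1Convex (ψ k))
    (hs : Summable fun k => sphereSup (ψ k)) : Summable ψ :=
  Pi.summable.2 fun x =>
    (hs.mul_right ‖x‖).of_norm_bounded fun k => (hψ k).abs_le_sphereSup_mul_norm x

protected theorem tsum (hψ : ∀ k, Hom1Convex (ψ k)) (hs : Summable fun k => sphereSup (ψ k)) :
    Hom1Convex (∑' k, ψ k) := by
  have hsum := Hom1Convex.summable hψ hs
  have hsumx : ∀ x, Summable fun k => ψ k x := Pi.summable.1 hsum
  refine ⟨⟨convex_univ, fun x _ y _ a b ha hb hab => ?_⟩, fun t ht x => ?_⟩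
  · simp only [tsum_apply hsum, smul_eq_mul]
    calc ∑' k, ψ k (a • x + b • y) ≤ ∑' k, (a * ψ k x + b * ψ k y) :=
          Summable.tsum_le_tsum (fun k => (hψ k).1.2 (mem_univ x) (mem_univ y) ha hb hab)
            (hsumx _) (((hsumx x).mul_left a).add ((hsumx y).mul_left b))
      _ = a * ∑' k, ψ k x + b * ∑' k, ψ k y := by
          rw [((hsumx x).mul_left a).tsum_add ((hsumx y).mul_left b), tsum_mul_left,
            tsum_mul_left]
  · simp only [tsum_apply hsum, (hψ _).2 t ht, tsum_mul_left]

theorem sphereSup_tsum_le (hψ : ∀ k, Hom1Convex (ψ k))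
    (hs : Summable fun k => sphereSup (ψ k)) :
    sphereSup (∑' k, ψ k) ≤ ∑' k, sphereSup (ψ k) :=
  sphereSup_le (tsum_nonneg fun _ => sphereSup_nonneg _) fun x hx => by
    rw [tsum_apply (Hom1Convex.summable hψ hs)]
    refine tsum_of_norm_bounded (f := fun k => ψ k x) hs.hasSum fun k => ?_
    simpa [mem_sphere_zero_iff_norm.mp hx] using (hψ k).abs_le_sphereSup_mul_norm x

end

end Hom1Convex

def deltaCosts (f : EuclideanSpace ℝ (Fin n) → ℝ) : Set ℝ :=
  {a | ∃ ψ φ, Hom1Convex ψ ∧ Hom1Convex φ ∧ f = ψ - φ ∧ a = sphereSup ψ + sphereSup φ}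

theorem deltaNorm_eq_sInf (f : EuclideanSpace ℝ (Fin n) → ℝ) :
    deltaNorm f = sInf (deltaCosts f) := rfl

section DeltaNorm

variable {f g ψ φ : EuclideanSpace ℝ (Fin n) → ℝ}

theorem sphereSup_add_mem_deltaCosts (hψ : Hom1Convex ψ) (hφ : Hom1Convex φ) :
    sphereSup ψ + sphereSup φ ∈ deltaCosts (ψ - φ) :=
  ⟨ψ, φ, hψ, hφ, rfl, rfl⟩

theorem deltaCosts_nonempty (hf : InDelta f) : (deltaCosts f).Nonempty := by
  obtain ⟨ψ, φ, hψ, hφ, rfl⟩ := hf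
  exact ⟨_, sphereSup_add_mem_deltaCosts hψ hφ⟩

theorem nonneg_of_mem_deltaCosts {a : ℝ} (ha : a ∈ deltaCosts f) : 0 ≤ a := by
  obtain ⟨ψ, φ, -, -, -, rfl⟩ := ha
  exact add_nonneg (sphereSup_nonneg ψ) (sphereSup_nonneg φ)

theorem deltaCosts_bddBelow (f : EuclideanSpace ℝ (Fin n) → ℝ) : BddBelow (deltaCosts f) :=
  ⟨0, fun _ => nonneg_of_mem_deltaCosts⟩

theorem deltaNorm_nonneg (f : EuclideanSpace ℝ (Fin n) → ℝ) : 0 ≤ deltaNorm f :=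
  Real.sInf_nonneg fun _ => nonneg_of_mem_deltaCosts

theorem deltaNorm_sub_le (hψ : Hom1Convex ψ) (hφ : Hom1Convex φ) :
    deltaNorm (ψ - φ) ≤ sphereSup ψ + sphereSup φ :=
  csInf_le (deltaCosts_bddBelow _) (sphereSup_add_mem_deltaCosts hψ hφ)

theorem InDelta.exists_decomposition_lt (hf : InDelta f) {r : ℝ} (hr : deltaNorm f < r) :
    ∃ ψ φ, Hom1Convex ψ ∧ Hom1Convex φ ∧ f = ψ - φ ∧ sphereSup ψ + sphereSup φ < r := by
  obtain ⟨_, ⟨ψ, φ, hψ, hφ, rfl, rfl⟩, hlt⟩ := exists_lt_of_csInf_lt (deltaCosts_nonempty hf) hr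
  exact ⟨ψ, φ, hψ, hφ, rfl, hlt⟩

theorem InDelta.add (hf : InDelta f) (hg : InDelta g) : InDelta (f + g) := by
  obtain ⟨ψ, φ, hψ, hφ, rfl⟩ := hf
  obtain ⟨ψ', φ', hψ', hφ', rfl⟩ := hg
  exact ⟨ψ + ψ', φ + φ', hψ.add hψ', hφ.add hφ', by abel⟩

theorem InDelta.sub (hf : InDelta f) (hg : InDelta g) : InDelta (f - g) := by
  obtain ⟨ψ, φ, hψ, hφ, rfl⟩ := hf
  obtain ⟨ψ', φ', hψ', hφ', rfl⟩ := hg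
  exact ⟨ψ + φ', φ + ψ', hψ.add hφ', hφ.add hψ', by abel⟩

theorem InDelta.abs_le_deltaNorm_mul_norm (hf : InDelta f) (x : EuclideanSpace ℝ (Fin n)) :
    |f x| ≤ deltaNorm f * ‖x‖ := by
  rw [deltaNorm_eq_sInf, mul_comm, ← smul_eq_mul, ← Real.sInf_smul_of_nonneg (norm_nonneg x)]
  refine le_csInf (deltaCosts_nonempty hf).smul_set ?_
  rintro _ ⟨_, ⟨ψ, φ, hψ, hφ, rfl, rfl⟩, rfl⟩
  calc |ψ x - φ x| ≤ |ψ x| + |φ x| := abs_sub _ _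
    _ ≤ sphereSup ψ * ‖x‖ + sphereSup φ * ‖x‖ :=
        add_le_add (hψ.abs_le_sphereSup_mul_norm x) (hφ.abs_le_sphereSup_mul_norm x)
    _ = ‖x‖ • (sphereSup ψ + sphereSup φ) := by rw [smul_eq_mul]; ring

theorem deltaNorm_zero : deltaNorm (0 : EuclideanSpace ℝ (Fin n) → ℝ) = 0 :=
  le_antisymm (by simpa [sphereSup_zero] using deltaNorm_sub_le Hom1Convex.zero Hom1Convex.zero)
    (deltaNorm_nonneg 0)

theorem InDelta.deltaNorm_eq_zero_iff (hf : InDelta f) : deltaNorm f = 0 ↔ f = 0 := by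
  refine ⟨fun h => funext fun x => ?_, fun h => h ▸ deltaNorm_zero⟩
  simpa [h] using hf.abs_le_deltaNorm_mul_norm x

theorem abs_smul_mem_deltaCosts {a : ℝ} (ha : a ∈ deltaCosts f) (c : ℝ) :
    |c| * a ∈ deltaCosts (c • f) := by
  obtain ⟨ψ, φ, hψ, hφ, rfl, rfl⟩ := ha
  rcases le_total 0 c with hc | hc
  · refine ⟨c • ψ, c • φ, hψ.smul hc, hφ.smul hc, smul_sub c ψ φ, ?_⟩
    rw [sphereSup_smul hc, sphereSup_smul hc, abs_of_nonneg hc, mul_add]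
  · refine ⟨(-c) • φ, (-c) • ψ, hφ.smul (neg_nonneg.2 hc), hψ.smul (neg_nonneg.2 hc),
      by rw [smul_sub, neg_smul, neg_smul, sub_neg_eq_add, neg_add_eq_sub], ?_⟩
    rw [sphereSup_smul (neg_nonneg.2 hc), sphereSup_smul (neg_nonneg.2 hc), abs_of_nonpos hc]
    ring

theorem deltaCosts_smul {c : ℝ} (hc : c ≠ 0) (f : EuclideanSpace ℝ (Fin n) → ℝ) :
    deltaCosts (c • f) = |c| • deltaCosts f := by
  refine Subset.antisymm (fun a ha => ⟨|c⁻¹| * a, ?_, ?_⟩) ?_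
  · simpa [smul_smul, hc] using abs_smul_mem_deltaCosts ha c⁻¹
  · simp [abs_inv, hc]
  · rintro _ ⟨a, ha, rfl⟩
    exact abs_smul_mem_deltaCosts ha c

theorem deltaNorm_smul (c : ℝ) (f : EuclideanSpace ℝ (Fin n) → ℝ) :
    deltaNorm (c • f) = |c| * deltaNorm f := by
  rcases eq_or_ne c 0 with rfl | hc
  · simp [deltaNorm_zero]
  · rw [deltaNorm_eq_sInf, deltaNorm_eq_sInf, deltaCosts_smul hc,
      Real.sInf_smul_of_nonneg (abs_nonneg c), smul_eq_mul]

theorem deltaNorm_add_le (hf : InDelta f) (hg : InDelta g) :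
    deltaNorm (f + g) ≤ deltaNorm f + deltaNorm g := by
  rw [deltaNorm_eq_sInf f, deltaNorm_eq_sInf g, ← csInf_add (deltaCosts_nonempty hf)
    (deltaCosts_bddBelow f) (deltaCosts_nonempty hg) (deltaCosts_bddBelow g)]
  refine le_csInf ((deltaCosts_nonempty hf).add (deltaCosts_nonempty hg)) ?_
  rintro _ ⟨_, ⟨ψ, φ, hψ, hφ, rfl, rfl⟩, _, ⟨ψ', φ', hψ', hφ', rfl, rfl⟩, rfl⟩
  calc deltaNorm (ψ - φ + (ψ' - φ')) = deltaNorm ((ψ + ψ') - (φ + φ')) := by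
        rw [sub_add_sub_comm]
    _ ≤ sphereSup (ψ + ψ') + sphereSup (φ + φ') := deltaNorm_sub_le (hψ.add hψ') (hφ.add hφ')
    _ ≤ sphereSup ψ + sphereSup φ + (sphereSup ψ' + sphereSup φ') := by
        linarith [sphereSup_add_le hψ.continuous hψ'.continuous,
          sphereSup_add_le hφ.continuous hφ'.continuous]

end DeltaNorm

theorem deltaNorm_tsum_sub_tsum_le {ψ φ : ℕ → EuclideanSpace ℝ (Fin n) → ℝ}
    (hψ : ∀ k, Hom1Convex (ψ k)) (hφ : ∀ k, Hom1Convex (φ k))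
    (hsψ : Summable fun k => sphereSup (ψ k)) (hsφ : Summable fun k => sphereSup (φ k)) :
    deltaNorm (∑' k, ψ k - ∑' k, φ k) ≤ ∑' k, (sphereSup (ψ k) + sphereSup (φ k)) := by
  rw [hsψ.tsum_add hsφ]
  exact (deltaNorm_sub_le (.tsum hψ hsψ) (.tsum hφ hsφ)).trans
    (add_le_add (Hom1Convex.sphereSup_tsum_le hψ hsψ) (Hom1Convex.sphereSup_tsum_le hφ hsφ))

theorem exists_deltaNorm_sub_le_tsum {F : ℕ → EuclideanSpace ℝ (Fin n) → ℝ}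
    (hF : ∀ k, InDelta (F k)) {ε : ℕ → ℝ} (hε : Summable ε)
    (hd : ∀ j, deltaNorm (F (j + 1) - F j) < ε j) :
    ∃ g, InDelta g ∧ ∀ m, deltaNorm (F m - g) ≤ ∑' j, ε (j + m) := by
  choose ψ φ hψ hφ hdecomp hlt using fun j =>
    ((hF (j + 1)).sub (hF j)).exists_decomposition_lt (hd j)
  have hcost : Summable fun j => sphereSup (ψ j) + sphereSup (φ j) :=
    hε.of_nonneg_of_le (fun j => add_nonneg (sphereSup_nonneg _) (sphereSup_nonneg _))
      fun j => (hlt j).le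
  have hsψ : Summable fun j => sphereSup (ψ j) :=
    hcost.of_nonneg_of_le (fun _ => sphereSup_nonneg _)
      fun _ => le_add_of_nonneg_right (sphereSup_nonneg _)
  have hsφ : Summable fun j => sphereSup (φ j) :=
    hcost.of_nonneg_of_le (fun _ => sphereSup_nonneg _)
      fun _ => le_add_of_nonneg_left (sphereSup_nonneg _)
  refine ⟨F 0 + (∑' j, ψ j - ∑' j, φ j), (hF 0).add ⟨_, _, .tsum hψ hsψ, .tsum hφ hsφ, rfl⟩,
    fun m => ?_⟩
  have htelescope : ∑ j ∈ Finset.range m, (ψ j - φ j) = F m - F 0 := by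
    rw [← Finset.sum_range_sub]
    exact Finset.sum_congr rfl fun j _ => (hdecomp j).symm
  have hremainder : F m - (F 0 + (∑' j, ψ j - ∑' j, φ j)) =
      ∑' j, φ (j + m) - ∑' j, ψ (j + m) := by
    rw [eq_add_of_sub_eq' htelescope.symm, ← (Hom1Convex.summable hψ hsψ).sum_add_tsum_nat_add m,
      ← (Hom1Convex.summable hφ hsφ).sum_add_tsum_nat_add m, Finset.sum_sub_distrib]
    abel
  have hsφ' := (summable_nat_add_iff m).2 hsφ
  have hsψ' := (summable_nat_add_iff m).2 hsψ
  have hε' := (summable_nat_add_iff m).2 hε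
  rw [hremainder]
  refine (deltaNorm_tsum_sub_tsum_le (fun j => hφ (j + m)) (fun j => hψ (j + m)) hsφ' hsψ').trans ?_
  exact Summable.tsum_le_tsum (fun j => (add_comm _ _).trans_le (hlt (j + m)).le)
    (hsφ'.add hsψ') hε'

theorem exists_monotone_forall_ge_lt {d : ℕ → ℕ → ℝ}
    (hd : ∀ ε : ℝ, 0 < ε → ∃ N, ∀ m ≥ N, ∀ k ≥ N, d m k < ε) {ε : ℕ → ℝ} (hε : ∀ j, 0 < ε j) :
    ∃ K : ℕ → ℕ, Monotone K ∧ ∀ j, ∀ k ≥ K j, d k (K j) < ε j := by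
  choose N hN using fun j => hd (ε j) (hε j)
  exact ⟨partialSups N, partialSups_monotone N, fun j k hk =>
    hN j k ((le_partialSups N j).trans hk) _ (le_partialSups N j)⟩

theorem InDelta.exists_tendsto_of_cauchy {F : ℕ → EuclideanSpace ℝ (Fin n) → ℝ}
    (hF : ∀ k, InDelta (F k))
    (hC : ∀ ε : ℝ, 0 < ε → ∃ N, ∀ m ≥ N, ∀ k ≥ N, deltaNorm (F m - F k) < ε) :
    ∃ g, InDelta g ∧ Tendsto (fun k => deltaNorm (F k - g)) atTop (𝓝 0) := by
  obtain ⟨K, hKmono, hK⟩ :=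
    exists_monotone_forall_ge_lt hC (ε := fun j => (1 / 2 : ℝ) ^ j) fun j => by positivity
  obtain ⟨g, hg, hgK⟩ := exists_deltaNorm_sub_le_tsum (fun j => hF (K j)) summable_geometric_two
    fun j => hK j _ (hKmono j.le_succ)
  refine ⟨g, hg, Metric.tendsto_atTop.2 fun δ hδ => ?_⟩
  have hbound : Tendsto (fun m => (1 / 2 : ℝ) ^ m + ∑' j, (1 / 2 : ℝ) ^ (j + m)) atTop (𝓝 0) := by
    simpa using (tendsto_pow_atTop_nhds_zero_of_lt_one (r := (1 / 2 : ℝ)) (by norm_num)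
      (by norm_num)).add (tendsto_sum_nat_add fun j => (1 / 2 : ℝ) ^ j)
  obtain ⟨m, hm⟩ := (hbound.eventually (gt_mem_nhds hδ)).exists
  refine ⟨K m, fun k hk => ?_⟩
  rw [Real.dist_eq, sub_zero, abs_of_nonneg (deltaNorm_nonneg _)]
  calc deltaNorm (F k - g) ≤ deltaNorm (F k - F (K m)) + deltaNorm (F (K m) - g) := by
        simpa using deltaNorm_add_le ((hF k).sub (hF (K m))) ((hF (K m)).sub hg)
    _ < _ := add_lt_add_of_lt_of_le (hK m k hk) (hgK m)
    _ < δ := hm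

/-- `deltaNorm` is a norm on `Δ`, and `Δ` is complete for it. -/
theorem deltaNorm_is_complete_norm {n : ℕ} :
    (∀ f : EuclideanSpace ℝ (Fin n) → ℝ, InDelta f → (deltaNorm f = 0 ↔ f = 0)) ∧
    (∀ f : EuclideanSpace ℝ (Fin n) → ℝ, InDelta f →
      ∀ c : ℝ, deltaNorm (c • f) = |c| * deltaNorm f) ∧
    (∀ f g : EuclideanSpace ℝ (Fin n) → ℝ, InDelta f → InDelta g →
      deltaNorm (f + g) ≤ deltaNorm f + deltaNorm g) ∧
    (∀ F : ℕ → (EuclideanSpace ℝ (Fin n) → ℝ), (∀ k, InDelta (F k)) →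
      (∀ ε : ℝ, 0 < ε → ∃ N, ∀ m ≥ N, ∀ k ≥ N, deltaNorm (F m - F k) < ε) →
      ∃ g, InDelta g ∧
        Filter.Tendsto (fun k => deltaNorm (F k - g)) Filter.atTop (nhds 0)) :=
  ⟨fun _ hf => hf.deltaNorm_eq_zero_iff, fun f _ c => deltaNorm_smul c f,
    fun _ _ hf hg => deltaNorm_add_le hf hg, fun _ hF hC => InDelta.exists_tendsto_of_cauchy hF hC⟩
end

section
/- In ℝ⁴, the symmetric (2,2)-superform Ω = dx₁∧dx₂∧dξ₃∧dξ₄ + dx₃∧dx₄∧dξ₁∧dξ₂ satisfies T(Ω) ≠ 0, where T = Σᵢ dxᵢ ∧ δ_{ξᵢ} (δ_{ξᵢ} is contraction with ∂/∂ξᵢ); consequently Ω cannot be written as a linear combination of elementary forms α₁∧α₁^#∧α₂∧α₂^#, since T annihilates every elementary form. -/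
/-!
`T` is an even derivation of the exterior algebra with `T(dx_i) = 0` and `T(dξ_i) = dx_i`.
Hence `T(α ∧ α^# ∧ x) = α ∧ α ∧ x + α ∧ α^# ∧ T x = α ∧ α^# ∧ T x`, and by induction `T` kills
every elementary form, so also every linear combination of them. On the other hand
`T Ω = dx₁∧dx₂∧(dx₃∧dξ₄ + dξ₃∧dx₄) + dx₃∧dx₄∧(dx₁∧dξ₂ + dξ₁∧dx₂)`, and contracting with
`∂/∂ξ₄` leaves `-dx₁∧dx₂∧dx₃ ≠ 0` (indices start at `0` in the code).
-/

noncomputable section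

/-- The model for superforms with constant coefficients on `ℝⁿ`: the exterior algebra
over `ℝⁿ_x ⊕ ℝⁿ_ξ`, with generators `dx_i` (first factor) and `dξ_i` (second factor). -/
abbrev SVec (n : ℕ) := (Fin n → ℝ) × (Fin n → ℝ)
abbrev SAlg (n : ℕ) := ExteriorAlgebra ℝ (SVec n)

/-- The `(1,0)`-form with coefficient vector `v`, i.e. `Σ v_i dx_i`. -/
def dX {n : ℕ} (v : Fin n → ℝ) : SAlg n := ExteriorAlgebra.ι ℝ (v, 0)

/-- The `(0,1)`-form `v^# = Σ v_i dξ_i`. -/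
def dXi {n : ℕ} (v : Fin n → ℝ) : SAlg n := ExteriorAlgebra.ι ℝ (0, v)

/-- The elementary `(p,p)`-form `α₁∧α₁^#∧…∧α_p∧α_p^#`. -/
def elemForm {n p : ℕ} (a : Fin p → (Fin n → ℝ)) : SAlg n :=
  (List.ofFn fun i => dX (a i) * dXi (a i)).prod

/-- The dual functional picking the `i`-th `ξ`-coordinate, used for contraction
`δ_{ξ_i}` with `∂/∂ξ_i`. -/
def xiDual (n : ℕ) (i : Fin n) : Module.Dual ℝ (SVec n) :=
  (LinearMap.proj i).comp (LinearMap.snd ℝ (Fin n → ℝ) (Fin n → ℝ))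

/-- The operator `T = Σ dx_i ∧ δ_{ξ_i}` on superforms. -/
def superT {n : ℕ} (ω : SAlg n) : SAlg n :=
  ∑ i, dX (Pi.single i 1) * (CliffordAlgebra.contractLeft (xiDual n i) ω)

/-- The symmetric `(2,2)`-form `dx₁∧dx₂∧dξ₃∧dξ₄ + dx₃∧dx₄∧dξ₁∧dξ₂` on `ℝ⁴`. -/
def Omega4 : SAlg 4 :=
  dX (Pi.single 0 1) * dX (Pi.single 1 1) * dXi (Pi.single 2 1) * dXi (Pi.single 3 1) +
  dX (Pi.single 2 1) * dX (Pi.single 3 1) * dXi (Pi.single 0 1) * dXi (Pi.single 1 1)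

open CliffordAlgebra

section Derivation

variable {n : ℕ}

lemma sum_smul_dX_single (v : Fin n → ℝ) : ∑ i, v i • dX (Pi.single i 1) = dX v := by
  let L : (Fin n → ℝ) →ₗ[ℝ] SAlg n := ExteriorAlgebra.ι ℝ ∘ₗ LinearMap.inl ℝ _ _
  change ∑ i, v i • L (Pi.single i 1) = L v
  conv_rhs => rw [← (Pi.basisFun ℝ (Fin n)).sum_repr v]
  simp only [map_sum, map_smul, Pi.basisFun_repr, Pi.basisFun_apply]

lemma dX_zero : dX (0 : Fin n → ℝ) = 0 := by
  simp [dX]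

lemma dX_mul_self (v : Fin n → ℝ) : dX v * dX v = 0 :=
  ExteriorAlgebra.ι_sq_zero _

lemma dX_mul_ι_mul (v : Fin n → ℝ) (u : SVec n) (x : SAlg n) :
    dX v * (ExteriorAlgebra.ι ℝ u * x) = -(ExteriorAlgebra.ι ℝ u * (dX v * x)) := by
  unfold dX
  rw [← mul_assoc, ← mul_assoc, ← neg_mul,
    eq_neg_of_add_eq_zero_left (ExteriorAlgebra.ι_add_mul_swap (v, 0) u)]

lemma xiDual_apply (i : Fin n) (u : SVec n) : xiDual n i u = u.2 i := rfl

lemma superT_add (ω η : SAlg n) : superT (ω + η) = superT ω + superT η := by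
  simp [superT, mul_add, Finset.sum_add_distrib]

lemma superT_smul (r : ℝ) (ω : SAlg n) : superT (r • ω) = r • superT ω := by
  simp [superT, Finset.smul_sum]

def superTLinear (n : ℕ) : SAlg n →ₗ[ℝ] SAlg n where
  toFun := superT
  map_add' := superT_add
  map_smul' := superT_smul

lemma superT_one : superT (1 : SAlg n) = 0 := by
  simp [superT]

/-- Moving `dx_i` past `u` costs a sign, which makes `T` an even derivation although each
`δ_{ξ_i}` is odd. -/
lemma superT_ι_mul (u : SVec n) (x : SAlg n) :
    superT (ExteriorAlgebra.ι ℝ u * x) = dX u.2 * x + ExteriorAlgebra.ι ℝ u * superT x := by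
  simp only [superT, contractLeft_ι_mul, mul_sub, mul_smul_comm, dX_mul_ι_mul,
    sub_neg_eq_add, Finset.sum_add_distrib, ← Finset.mul_sum,
    ← smul_mul_assoc, ← Finset.sum_mul, xiDual_apply, sum_smul_dX_single]

lemma superT_ι (u : SVec n) : superT (ExteriorAlgebra.ι ℝ u) = dX u.2 := by
  simpa [superT_one] using superT_ι_mul u 1

lemma superT_dX_mul (v : Fin n → ℝ) (x : SAlg n) : superT (dX v * x) = dX v * superT x := by
  have h := superT_ι_mul (v, 0) x
  rwa [dX_zero, zero_mul, zero_add] at h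

lemma superT_dXi_mul (v : Fin n → ℝ) (x : SAlg n) :
    superT (dXi v * x) = dX v * x + dXi v * superT x :=
  superT_ι_mul (0, v) x

lemma superT_dXi (v : Fin n → ℝ) : superT (dXi v) = dX v :=
  superT_ι (0, v)

lemma superT_dX_mul_dXi_mul (v : Fin n → ℝ) (x : SAlg n) :
    superT (dX v * (dXi v * x)) = dX v * (dXi v * superT x) := by
  rw [superT_dX_mul, superT_dXi_mul, mul_add, ← mul_assoc, dX_mul_self, zero_mul, zero_add]

theorem superT_elemForm {p : ℕ} (a : Fin p → Fin n → ℝ) : superT (elemForm a) = 0 := by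
  induction p with
  | zero => simp [elemForm, superT_one]
  | succ p ih =>
    have h := ih fun i => a i.succ
    simp only [elemForm, List.ofFn_succ, List.prod_cons, mul_assoc] at h ⊢
    rw [superT_dX_mul_dXi_mul, h, mul_zero, mul_zero]

theorem superT_sum_smul_elemForm {p m : ℕ} (c : Fin m → ℝ) (a : Fin m → Fin p → Fin n → ℝ) :
    superT (∑ i, c i • elemForm (a i)) = 0 := by
  change superTLinear n _ = 0
  simp [superTLinear, superT_elemForm]

end Derivation

section Contraction

variable {n : ℕ} (f : Module.Dual ℝ (SVec n))

lemma contractLeft_dX_mul (v : Fin n → ℝ) (x : SAlg n) :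
    contractLeft f (dX v * x) = f (v, 0) • x - dX v * contractLeft f x :=
  contractLeft_ι_mul f _ x

lemma contractLeft_dXi_mul (v : Fin n → ℝ) (x : SAlg n) :
    contractLeft f (dXi v * x) = f (0, v) • x - dXi v * contractLeft f x :=
  contractLeft_ι_mul f _ x

lemma contractLeft_dX (v : Fin n → ℝ) : contractLeft f (dX v) = algebraMap ℝ _ (f (v, 0)) :=
  contractLeft_ι _ f _

lemma contractLeft_dXi (v : Fin n → ℝ) : contractLeft f (dXi v) = algebraMap ℝ _ (f (0, v)) :=
  contractLeft_ι _ f _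

end Contraction

def xDual (n : ℕ) (i : Fin n) : Module.Dual ℝ (SVec n) :=
  (LinearMap.proj i).comp (LinearMap.fst ℝ (Fin n → ℝ) (Fin n → ℝ))

lemma xDual_apply {n : ℕ} (i : Fin n) (u : SVec n) : xDual n i u = u.1 i := rfl

lemma dX_single_mul_dX_single_mul_dX_single_ne_zero {n : ℕ} {i j k : Fin n} (hij : i ≠ j)
    (hik : i ≠ k) (hjk : j ≠ k) :
    dX (Pi.single i 1) * (dX (Pi.single j 1) * dX (Pi.single k 1)) ≠ (0 : SAlg n) := by
  intro h
  -- contracting with the dual functionals of `dx_i`, `dx_j`, `dx_k` in turn leaves `1`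
  have h1 := congrArg (contractLeft (xDual n k) ∘ contractLeft (xDual n j) ∘
    contractLeft (xDual n i)) h
  simp [contractLeft_dX_mul, contractLeft_dX, xDual_apply, hij, hik, hjk] at h1

lemma superT_Omega4 : superT Omega4 =
    dX (Pi.single 0 1) * (dX (Pi.single 1 1) *
      (dX (Pi.single 2 1) * dXi (Pi.single 3 1) + dXi (Pi.single 2 1) * dX (Pi.single 3 1))) +
    dX (Pi.single 2 1) * (dX (Pi.single 3 1) *
      (dX (Pi.single 0 1) * dXi (Pi.single 1 1) + dXi (Pi.single 0 1) * dX (Pi.single 1 1))) := by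
  simp only [Omega4, mul_assoc, superT_add, superT_dX_mul, superT_dXi_mul, superT_dXi]

lemma contractLeft_xiDual_superT_Omega4 :
    contractLeft (xiDual 4 3) (superT Omega4) =
      -(dX (Pi.single 0 1) * (dX (Pi.single 1 1) * dX (Pi.single 2 1))) := by
  simp [superT_Omega4, contractLeft_dX_mul, contractLeft_dXi_mul, contractLeft_dX,
    contractLeft_dXi, xiDual_apply]

theorem superT_Omega4_ne_zero : superT Omega4 ≠ 0 := by
  intro h
  have hcontr := contractLeft_xiDual_superT_Omega4
  rw [h, map_zero, eq_comm, neg_eq_zero] at hcontr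
  exact dX_single_mul_dX_single_mul_dX_single_ne_zero (by decide) (by decide) (by decide) hcontr

/-- `T(Ω) ≠ 0` for `Ω = dx₁∧dx₂∧dξ₃∧dξ₄ + dx₃∧dx₄∧dξ₁∧dξ₂` in `ℝ⁴`, while `T`
annihilates every elementary form; consequently `Ω` is not a linear combination of
elementary forms. -/
theorem omega4_not_strong :
    superT Omega4 ≠ 0 ∧
    (∀ a : Fin 2 → (Fin 4 → ℝ), superT (elemForm a) = 0) ∧
    ¬ ∃ (m : ℕ) (c : Fin m → ℝ) (a : Fin m → Fin 2 → (Fin 4 → ℝ)),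
        Omega4 = ∑ i, c i • elemForm (a i) := by
  refine ⟨superT_Omega4_ne_zero, superT_elemForm, ?_⟩
  rintro ⟨m, c, a, hΩ⟩
  exact superT_Omega4_ne_zero (hΩ ▸ superT_sum_smul_elemForm c a)
end
end
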